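/- Under the coaction formulas of Example 4.10 (specialization C = 1): the map δ̄ defined on generators by δ̄(y⁺₁) = −q(q−q⁻¹)K̃⁻¹x̃⁺₀ ⊗ 1 + K̃⁻¹ ⊗ y⁺₁ and δ̄(y⁺₀) = −q⁻¹(q−q⁻¹)x̃⁻₁ ⊗ 1 + K̃ ⊗ y⁺₀ is compatible with the q-Serre relation in the first argument: i.e., in the tensor product algebra (U'_q^{Dr,▷,+}/_{C=1}) ⊗ U_q^{T,+}, the elements A = δ̄(y⁺₀) and B = δ̄(y⁺₁) satisfy A³B − [3]_q A²BA + [3]_q ABA² − BA³ = 0, given that the components satisfy: x̃⁻₁, x̃⁺₀, K̃ satisfy K̃x̃⁺₀K̃⁻¹ = q²x̃⁺₀, K̃x̃⁻₁K̃⁻¹ = q⁻²x̃⁻₁, the respective cubic Serre-type relations among themselves, [x̃⁺₀, x̃⁻₁] = K̃ψ₁-type relation, and y⁺₀, y⁺₁ satisfy the q-Serre relations. -/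

import Mathlib

/-! With `E₀ = x̃⁻₁K̃⁻¹`, `E₁ = x̃⁺₀`, `k = K̃ ⊗ 1` and the scalars `s, t` of the coaction, the two
images factor as `A = (s • E₀ ⊗ 1 + 1 ⊗ y₀) k` and `B = k⁻¹ (t • E₁ ⊗ 1 + 1 ⊗ y₁)`. Conjugation by
`k` scales `E₀ ⊗ 1` by `q⁻²` and `E₁ ⊗ 1` by `q²` and fixes the second tensor factor, so after
moving every `k` to the right all mixed terms of the Serre polynomial in `A, B` cancel, leaving
`(s³ t q⁻² S(E₀, E₁) ⊗ 1 + 1 ⊗ S(y₀, y₁)) k²`, where both Serre polynomials vanish. The relation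
in `U` is given as the nested commutator `[E₀, [E₀, [E₀, E₁]_q]_{q⁻¹}]`, which expands to
`S(E₀, E₁)`. -/

open TensorProduct

variable {K : Type*} [Field K]
variable {U : Type*} [Ring U] [Algebra K U]
variable {V : Type*} [Ring V] [Algebra K V]

/-- q-commutator `[x,y]_q = q·xy − q⁻¹·yx`. -/
noncomputable def qBrk {A : Type*} [Ring A] [Algebra K A] (q : K) (x y : A) : A :=
  q • (x * y) - q⁻¹ • (y * x)

section QSerre

variable {W W' : Type*} [Ring W] [Algebra K W] [Ring W'] [Algebra K W']

def qSerre (q : K) (x y : W) : W :=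
  x ^ 3 * y - (q ^ 2 + 1 + q⁻¹ ^ 2) • (x ^ 2 * y * x)
    + (q ^ 2 + 1 + q⁻¹ ^ 2) • (x * y * x ^ 2) - y * x ^ 3

theorem map_qSerre (f : W →ₐ[K] W') (q : K) (x y : W) :
    f (qSerre q x y) = qSerre q (f x) (f y) := by
  simp [qSerre]

theorem commutator_qBrk_qBrk_eq_qSerre {q : K} (hq : q ≠ 0) (x y : W) :
    x * qBrk q⁻¹ x (qBrk q x y) - qBrk q⁻¹ x (qBrk q x y) * x = qSerre q x y := by
  simp only [qSerre, qBrk, inv_inv, mul_sub, sub_mul, mul_smul_comm, smul_mul_assoc, smul_sub,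
    smul_smul, pow_succ, pow_zero, one_mul, mul_assoc]
  match_scalars <;> field_simp <;> ring

theorem mul_left_comm_of_mul_eq_smul {x y : W} {c : K} (h : x * y = c • (y * x)) (w : W) :
    x * (y * w) = c • (y * (x * w)) := by
  rw [← mul_assoc, h, smul_mul_assoc, mul_assoc]

theorem Units.inv_mul_eq_smul_of_mul_eq_smul {k : Wˣ} {x : W} {c : K} (hc : c ≠ 0)
    (h : k * x = c • (x * k)) : ↑k⁻¹ * x = c⁻¹ • (x * ↑k⁻¹) := by
  have h' : c • (↑k⁻¹ * x) = x * ↑k⁻¹ := by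
    calc c • (↑k⁻¹ * x) = ↑k⁻¹ * (c • (x * k)) * ↑k⁻¹ := by simp [mul_assoc]
      _ = x * ↑k⁻¹ := by rw [← h]; simp
  rw [← h', inv_smul_smul₀ hc]

theorem qSerre_smul_add_mul_inv_mul_smul_add {q : K} (hq : q ≠ 0) (s t : K) {X Y u v : W}
    (k : Wˣ) (hkX : k * X = (q⁻¹ ^ 2) • (X * k)) (hkY : k * Y = (q ^ 2) • (Y * k))
    (hku : Commute (k : W) u) (hkv : Commute (k : W) v)
    (huX : Commute u X) (huY : Commute u Y) (hvX : Commute v X) :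
    qSerre q ((s • X + u) * k) (↑k⁻¹ * (t • Y + v))
      = ((s ^ 3 * t * q⁻¹ ^ 2) • qSerre q X Y + qSerre q u v) * k ^ 2 := by
  have hkX' := Units.inv_mul_eq_smul_of_mul_eq_smul (pow_ne_zero 2 (inv_ne_zero hq)) hkX
  have hkY' := Units.inv_mul_eq_smul_of_mul_eq_smul (pow_ne_zero 2 hq) hkY
  have hku' := hku.units_inv_left
  have hkv' := hkv.units_inv_left
  simp only [qSerre, pow_succ, pow_zero, one_mul, mul_add, add_mul, smul_add, smul_sub, sub_mul,
    smul_mul_assoc, mul_smul_comm, smul_smul, mul_assoc, Units.inv_mul_cancel_left, Units.mul_inv,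
    mul_one, hkY, hkY', hkv.eq, hkv'.eq, huY.eq,
    mul_left_comm_of_mul_eq_smul hkX, mul_left_comm_of_mul_eq_smul hkY,
    mul_left_comm_of_mul_eq_smul hkX', hku.left_comm, hkv.left_comm, hku'.left_comm,
    huX.left_comm, huY.left_comm, hvX.left_comm]
  match_scalars <;> field_simp <;> ring

theorem Units.mul_eq_smul_mul_of_conj_eq_smul (k : Wˣ) {x : W} {c : K}
    (h : k * x * ↑k⁻¹ = c • x) : k * x = c • (x * k) := by
  rw [(Units.mul_inv_eq_iff_eq_mul k).1 h, smul_mul_assoc]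

end QSerre

open Algebra.TensorProduct in
theorem qSerre_tmul_coaction_eq_zero {q : K} (hq : q ≠ 0) (s t : K) (κ : Uˣ) {E₀ E₁ : U}
    {y₀ y₁ : V} (h₀ : κ * E₀ = (q⁻¹ ^ 2) • (E₀ * κ)) (h₁ : κ * E₁ = (q ^ 2) • (E₁ * κ))
    (hE : qSerre q E₀ E₁ = 0) (hy : qSerre q y₀ y₁ = 0) :
    qSerre q ((s • E₀ ⊗ₜ[K] (1 : V) + 1 ⊗ₜ y₀) * ((κ : U) ⊗ₜ 1))
      (((↑κ⁻¹ : U) ⊗ₜ[K] (1 : V)) * (t • E₁ ⊗ₜ 1 + 1 ⊗ₜ y₁)) = 0 := by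
  let k : (U ⊗[K] V)ˣ := ⟨(κ : U) ⊗ₜ 1, (↑κ⁻¹ : U) ⊗ₜ 1, by simp [one_def], by simp [one_def]⟩
  have commute_tmul (x : U) (y : V) : Commute (x ⊗ₜ[K] (1 : V)) ((1 : U) ⊗ₜ[K] y) :=
    (Commute.one_right x).tmul (Commute.one_left y)
  have hE' : qSerre q (E₀ ⊗ₜ[K] (1 : V)) (E₁ ⊗ₜ 1) = 0 := by
    simpa [hE] using (map_qSerre (includeLeft : U →ₐ[K] U ⊗[K] V) q E₀ E₁).symm
  have hy' : qSerre q ((1 : U) ⊗ₜ[K] y₀) (1 ⊗ₜ y₁) = 0 := by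
    simpa [hy] using (map_qSerre (includeRight : V →ₐ[K] U ⊗[K] V) q y₀ y₁).symm
  have hk₀ : (k : U ⊗[K] V) * (E₀ ⊗ₜ 1) = (q⁻¹ ^ 2) • ((E₀ ⊗ₜ 1) * (k : U ⊗[K] V)) := by
    simp [k, h₀, TensorProduct.smul_tmul']
  have hk₁ : (k : U ⊗[K] V) * (E₁ ⊗ₜ 1) = (q ^ 2) • ((E₁ ⊗ₜ 1) * (k : U ⊗[K] V)) := by
    simp [k, h₁, TensorProduct.smul_tmul']
  have key := qSerre_smul_add_mul_inv_mul_smul_add hq s t k hk₀ hk₁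
    (commute_tmul κ y₀) (commute_tmul κ y₁) (commute_tmul E₀ y₀).symm (commute_tmul E₁ y₀).symm
    (commute_tmul E₀ y₁).symm
  rwa [hE', hy', smul_zero, add_zero, zero_mul] at key

theorem coaction_serre_compatible_general
    (q : K) (hq : q ≠ 0)
    -- data in U : the Drinfeld currents at C = 1
    (x0 xm1 Kt Kinv : U)
    (hK1 : Kt * Kinv = 1) (hK2 : Kinv * Kt = 1)
    (hconj0 : Kt * x0 * Kinv = (q ^ 2) • x0)
    (hconj1 : Kt * xm1 * Kinv = (q⁻¹ ^ 2) • xm1)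
    -- level-zero q-Serre relations for E₀ := x̃⁻₁K̃⁻¹ and E₁ := x̃⁺₀
    (hSerre01 : (xm1 * Kinv) * qBrk (K := K) q⁻¹ (xm1 * Kinv) (qBrk (K := K) q (xm1 * Kinv) x0)
        - qBrk (K := K) q⁻¹ (xm1 * Kinv) (qBrk (K := K) q (xm1 * Kinv) x0) * (xm1 * Kinv) = 0)
    -- data in V : the equitable generators with their q-Serre relations
    (y0 y1 : V)
    (hVSerre01 : y0 ^ 3 * y1 - (q ^ 2 + 1 + q⁻¹ ^ 2) • (y0 ^ 2 * y1 * y0)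
        + (q ^ 2 + 1 + q⁻¹ ^ 2) • (y0 * y1 * y0 ^ 2) - y1 * y0 ^ 3 = 0)
    -- the coaction images
    (a b : U ⊗[K] V)
    (ha : a = (-(q⁻¹ * (q - q⁻¹))) • (xm1 ⊗ₜ[K] (1 : V)) + Kt ⊗ₜ[K] y0)
    (hb : b = (-(q * (q - q⁻¹))) • ((Kinv * x0) ⊗ₜ[K] (1 : V)) + Kinv ⊗ₜ[K] y1) :
    a ^ 3 * b - (q ^ 2 + 1 + q⁻¹ ^ 2) • (a ^ 2 * b * a)
      + (q ^ 2 + 1 + q⁻¹ ^ 2) • (a * b * a ^ 2) - b * a ^ 3 = 0 := by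
  let κ : Uˣ := ⟨Kt, Kinv, hK1, hK2⟩
  have hκE₀ : κ * (xm1 * Kinv) = (q⁻¹ ^ 2) • (xm1 * Kinv * κ) := by
    rw [← mul_assoc, hconj1, mul_assoc, hK2, mul_one]
  have hκE₁ : κ * x0 = (q ^ 2) • (x0 * κ) := κ.mul_eq_smul_mul_of_conj_eq_smul hconj0
  have ha' : a = (-(q⁻¹ * (q - q⁻¹)) • (xm1 * Kinv) ⊗ₜ[K] (1 : V) + 1 ⊗ₜ y0) * (Kt ⊗ₜ 1) := by
    simp [ha, add_mul, mul_assoc, hK2, TensorProduct.smul_tmul']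
  have hb' : b = (Kinv ⊗ₜ[K] (1 : V)) * (-(q * (q - q⁻¹)) • x0 ⊗ₜ 1 + 1 ⊗ₜ y1) := by
    simp [hb, mul_add, TensorProduct.smul_tmul']
  change qSerre q a b = 0
  rw [ha', hb']
  exact qSerre_tmul_coaction_eq_zero hq _ _ κ hκE₀ hκE₁
    (by rwa [← commutator_qBrk_qBrk_eq_qSerre hq]) hVSerre01

theorem coaction_serre_compatible
    (q : K) (hq : q ≠ 0) (hq2 : q ^ 2 ≠ 1)
    -- data in U : the Drinfeld currents at C = 1
    (x0 xm1 Kt Kinv psi1 phi1 : U)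
    (hK1 : Kt * Kinv = 1) (hK2 : Kinv * Kt = 1)
    (hconj0 : Kt * x0 * Kinv = (q ^ 2) • x0)
    (hconj1 : Kt * xm1 * Kinv = (q⁻¹ ^ 2) • xm1)
    (hphi : phi1 = 0)
    (hcomm : x0 * xm1 - xm1 * x0 = (q - q⁻¹)⁻¹ • (psi1 - phi1))
    (hpsiK : psi1 * Kt = Kt * psi1)
    -- level-zero q-Serre relations for E₀ := x̃⁻₁K̃⁻¹ and E₁ := x̃⁺₀
    (hSerre01 : (xm1 * Kinv) * qBrk (K := K) q⁻¹ (xm1 * Kinv) (qBrk (K := K) q (xm1 * Kinv) x0)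
        - qBrk (K := K) q⁻¹ (xm1 * Kinv) (qBrk (K := K) q (xm1 * Kinv) x0) * (xm1 * Kinv) = 0)
    (hSerre10 : x0 * qBrk (K := K) q⁻¹ x0 (qBrk (K := K) q x0 (xm1 * Kinv))
        - qBrk (K := K) q⁻¹ x0 (qBrk (K := K) q x0 (xm1 * Kinv)) * x0 = 0)
    -- data in V : the equitable generators with their q-Serre relations
    (y0 y1 : V)
    (hVSerre01 : y0 ^ 3 * y1 - (q ^ 2 + 1 + q⁻¹ ^ 2) • (y0 ^ 2 * y1 * y0)
        + (q ^ 2 + 1 + q⁻¹ ^ 2) • (y0 * y1 * y0 ^ 2) - y1 * y0 ^ 3 = 0)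
    (hVSerre10 : y1 ^ 3 * y0 - (q ^ 2 + 1 + q⁻¹ ^ 2) • (y1 ^ 2 * y0 * y1)
        + (q ^ 2 + 1 + q⁻¹ ^ 2) • (y1 * y0 * y1 ^ 2) - y0 * y1 ^ 3 = 0)
    -- the coaction images
    (a b : U ⊗[K] V)
    (ha : a = (-(q⁻¹ * (q - q⁻¹))) • (xm1 ⊗ₜ[K] (1 : V)) + Kt ⊗ₜ[K] y0)
    (hb : b = (-(q * (q - q⁻¹))) • ((Kinv * x0) ⊗ₜ[K] (1 : V)) + Kinv ⊗ₜ[K] y1) :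
    a ^ 3 * b - (q ^ 2 + 1 + q⁻¹ ^ 2) • (a ^ 2 * b * a)
      + (q ^ 2 + 1 + q⁻¹ ^ 2) • (a * b * a ^ 2) - b * a ^ 3 = 0 :=
  coaction_serre_compatible_general q hq x0 xm1 Kt Kinv hK1 hK2 hconj0 hconj1 hSerre01 y0 y1
    hVSerre01 a b ha hb
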